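/- Let f be a measurable map of a space I preserving an ergodic probability measure μ, and W ⊆ I measurable with μ(W) > 0. Let F : W → W be the first return map of f to W and τ the first return time. Then the normalized restriction ν = μ(W)^{-1}·μ|W is F-invariant, has integrable return time ∫_W τ dν = 1/μ(W), and the lift formula holds: for every measurable E, μ(E) = μ(W) · ∑_{k≥0} ν(f^{-k}(E) ∩ {τ > k}). -/

import Mathlib

open MeasureTheory Set ENNReal Filter Topology

set_option linter.unusedSectionVars false

namespace KacAux

variable {I : Type*} [MeasurableSpace I]

/-- The set of points whose iterates at times `1..k` avoid `W`. -/
def C (f : I → I) (W : Set I) (k : ℕ) : Set I := {x | ∀ j, 1 ≤ j → j ≤ k → f^[j] x ∉ W}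

lemma mem_C {f : I → I} {W : Set I} {k : ℕ} {x : I} :
    x ∈ C f W k ↔ ∀ j, 1 ≤ j → j ≤ k → f^[j] x ∉ W := Iff.rfl

lemma C_zero (f : I → I) (W : Set I) : C f W 0 = univ := by
  ext x; simp only [mem_C, mem_univ, iff_true]; intro j h1 h2; omega

lemma C_eq_iInter (f : I → I) (W : Set I) (k : ℕ) :
    C f W k = ⋂ j ∈ Finset.Icc 1 k, f^[j] ⁻¹' Wᶜ := by
  ext x; simp [mem_C, Finset.mem_Icc, and_imp]

lemma measurableSet_C {f : I → I} (hf : Measurable f) {W : Set I} (hW : MeasurableSet W)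
    (k : ℕ) : MeasurableSet (C f W k) := by
  rw [C_eq_iInter]
  exact MeasurableSet.biInter (Finset.countable_toSet _)
    (fun j _ => (hf.iterate j) hW.compl)

lemma antitone_C (f : I → I) (W : Set I) : Antitone (C f W) := by
  intro m n hmn x hx j h1 h2
  exact hx j h1 (h2.trans hmn)

lemma preimage_C (f : I → I) (W : Set I) (k : ℕ) :
    f ⁻¹' (C f W k ∩ Wᶜ) = C f W (k + 1) := by
  ext x
  simp only [mem_preimage, mem_inter_iff, mem_C, mem_compl_iff]
  constructor
  · rintro ⟨h, h0⟩ j h1 h2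
    obtain ⟨m, rfl⟩ := Nat.exists_eq_succ_of_ne_zero (by omega : j ≠ 0)
    rw [Function.iterate_succ_apply]
    cases Nat.eq_zero_or_pos m with
    | inl hm => subst hm; simpa using h0
    | inr hm => exact h m hm (by omega)
  · intro h
    refine ⟨fun j h1 h2 => ?_, by simpa using h 1 le_rfl (by omega)⟩
    have := h (j + 1) (by omega) (by omega)
    rwa [Function.iterate_succ_apply] at this

lemma mem_iInter_C {f : I → I} {W : Set I} {x : I} :
    x ∈ ⋂ k, C f W k ↔ ∀ j, 1 ≤ j → f^[j] x ∉ W := by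
  simp only [mem_iInter, mem_C]
  exact ⟨fun h j h1 => h j j h1 le_rfl, fun h k j h1 _ => h j h1⟩

/-- The set of points that never enter `W` at positive times is null. -/
lemma iInter_C_null {f : I → I} {μ : Measure I} [IsProbabilityMeasure μ]
    (hf : Ergodic f μ) {W : Set I} (hW : MeasurableSet W) (hWpos : 0 < μ W) :
    μ (⋂ k, C f W k) = 0 := by
  set S := ⋂ k, C f W k with hS
  have hSmeas : MeasurableSet S :=
    MeasurableSet.iInter (fun k => measurableSet_C hf.measurable hW k)
  have hsub : S ⊆ f ⁻¹' S := by
    intro x hx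
    rw [mem_preimage, mem_iInter_C]
    intro j h1
    rw [← Function.iterate_succ_apply]
    exact mem_iInter_C.mp hx (j + 1) (by omega)
  rcases hf.ae_empty_or_univ_of_ae_le_preimage hSmeas.nullMeasurableSet
      hsub.eventuallyLE with h | h
  · exact ae_eq_empty.mp h
  · exfalso
    have h1 : μ S = 1 := by
      rw [measure_congr h, measure_univ]
    have hsub2 : S ⊆ f ⁻¹' Wᶜ := by
      intro x hx
      exact mem_iInter_C.mp hx 1 le_rfl
    have h2 : μ (f ⁻¹' Wᶜ) = 1 := le_antisymm prob_le_one (h1 ▸ measure_mono hsub2)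
    have h3 : μ (f ⁻¹' Wᶜ) = μ Wᶜ :=
      hf.toMeasurePreserving.measure_preimage hW.compl.nullMeasurableSet
    rw [h3, prob_compl_eq_one_sub hW] at h2
    have hne : μ W ≠ 0 := hWpos.ne'
    have : (1 : ℝ≥0∞) - μ W < 1 := ENNReal.sub_lt_self one_ne_top one_ne_zero hne
    exact absurd h2 this.ne

/-- The key telescoping identity. -/
lemma telescope {f : I → I} {μ : Measure I} [IsProbabilityMeasure μ]
    (hf : Ergodic f μ) {W : Set I} (hW : MeasurableSet W) (hWpos : 0 < μ W)
    {E : Set I} (hE : MeasurableSet E) :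
    μ E = ∑' k : ℕ, μ (f^[k] ⁻¹' E ∩ C f W k ∩ W) := by
  set H : ℕ → Set I := fun k => f^[k] ⁻¹' E ∩ C f W k with hHdef
  have hHmeas : ∀ k, MeasurableSet (H k) := fun k =>
    ((hf.measurable.iterate k) hE).inter (measurableSet_C hf.measurable hW k)
  have hH0 : H 0 = E := by
    simp [hHdef, C_zero]
  have key : ∀ k, μ (H k) = μ (H k ∩ W) + μ (H (k + 1)) := by
    intro k
    have e1 : H (k + 1) = f ⁻¹' (H k ∩ Wᶜ) := by
      rw [hHdef]
      simp only
      rw [inter_assoc, preimage_inter, preimage_C, Function.iterate_succ,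
        Set.preimage_comp]
    have e2 : μ (H (k + 1)) = μ (H k ∩ Wᶜ) :=
      e1 ▸ hf.toMeasurePreserving.measure_preimage
        (((hHmeas k).inter hW.compl).nullMeasurableSet)
    rw [e2, ← Set.diff_eq, (measure_inter_add_diff _ hW)]
  have parts : ∀ n, μ E = (∑ k ∈ Finset.range n, μ (H k ∩ W)) + μ (H n) := by
    intro n
    induction n with
    | zero => simp [hH0]
    | succ n ih =>
      rw [ih, key n, Finset.sum_range_succ]
      ring
  have hCnull : μ (⋂ k, C f W k) = 0 := iInter_C_null hf hW hWpos
  have hCtend : Tendsto (fun n => μ (C f W n)) atTop (𝓝 0) := by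
    have := tendsto_measure_iInter_atTop (μ := μ)
      (fun k => (measurableSet_C hf.measurable hW k).nullMeasurableSet)
      (antitone_C f W) ⟨0, measure_ne_top μ _⟩
    rwa [hCnull] at this
  have hHtend : Tendsto (fun n => μ (H n)) atTop (𝓝 0) := by
    apply tendsto_of_tendsto_of_tendsto_of_le_of_le tendsto_const_nhds hCtend
    · exact fun n => zero_le
    · exact fun n => measure_mono inter_subset_right
  have hsum : Tendsto (fun n => ∑ k ∈ Finset.range n, μ (H k ∩ W)) atTop
      (𝓝 (∑' k, μ (H k ∩ W))) := ENNReal.tendsto_nat_tsum _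
  have hadd := hsum.add hHtend
  rw [add_zero] at hadd
  have := tendsto_nhds_unique (tendsto_const_nhds.congr (fun n => parts n)) hadd
  rw [this]

section Tau
variable {f : I → I} {W : Set I} {τ : I → ℕ}
  (hτ : ∀ x, τ x = sInf {n : ℕ | 1 ≤ n ∧ f^[n] x ∈ W})
include hτ

lemma tau_zero_iff {x : I} : τ x = 0 ↔ ∀ j, 1 ≤ j → f^[j] x ∉ W := by
  constructor
  · intro h j h1 hj
    have hne : {n : ℕ | 1 ≤ n ∧ f^[n] x ∈ W}.Nonempty := ⟨j, h1, hj⟩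
    have h2 := (Nat.sInf_mem hne).1
    rw [← hτ x, h] at h2
    omega
  · intro h
    have : {n : ℕ | 1 ≤ n ∧ f^[n] x ∈ W} = ∅ := by
      ext n; simp only [mem_setOf_eq, mem_empty_iff_false, iff_false, not_and]
      exact fun h1 => h n h1
    rw [hτ, this, Nat.sInf_empty]

lemma lt_tau_iff {x : I} {k : ℕ} :
    k < τ x ↔ {n : ℕ | 1 ≤ n ∧ f^[n] x ∈ W}.Nonempty ∧ x ∈ C f W k := by
  constructor
  · intro h
    have hne : {n : ℕ | 1 ≤ n ∧ f^[n] x ∈ W}.Nonempty := by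
      by_contra hc
      rw [Set.not_nonempty_iff_eq_empty] at hc
      rw [hτ, hc, Nat.sInf_empty] at h
      omega
    refine ⟨hne, fun j h1 h2 hj => ?_⟩
    have h3 := Nat.sInf_le (show j ∈ {n : ℕ | 1 ≤ n ∧ f^[n] x ∈ W} from ⟨h1, hj⟩)
    rw [← hτ x] at h3
    omega
  · rintro ⟨hne, hC⟩
    have hmem := Nat.sInf_mem hne
    rw [← hτ x] at hmem
    by_contra h
    exact hC _ hmem.1 (by omega) hmem.2

lemma tau_mem {x : I} (hne : {n : ℕ | 1 ≤ n ∧ f^[n] x ∈ W}.Nonempty) :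
    1 ≤ τ x ∧ f^[τ x] x ∈ W := by
  have hmem := Nat.sInf_mem hne
  rw [← hτ x] at hmem
  exact hmem

lemma tau_eq_succ_iff {x : I} {k : ℕ} :
    τ x = k + 1 ↔ f^[k + 1] x ∈ W ∧ x ∈ C f W k := by
  constructor
  · intro h
    have h1 : k < τ x := by omega
    obtain ⟨hne, hC⟩ := (lt_tau_iff hτ).mp h1
    have hmem := (tau_mem hτ hne).2
    rw [h] at hmem
    exact ⟨hmem, hC⟩
  · rintro ⟨hW', hC⟩
    have hne : {n : ℕ | 1 ≤ n ∧ f^[n] x ∈ W}.Nonempty := ⟨k + 1, by omega, hW'⟩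
    have h1 : k < τ x := (lt_tau_iff hτ).mpr ⟨hne, hC⟩
    have h2 : τ x ≤ k + 1 := by
      have := Nat.sInf_le (show k + 1 ∈ {n : ℕ | 1 ≤ n ∧ f^[n] x ∈ W} from ⟨by omega, hW'⟩)
      rw [← hτ x] at this
      exact this
    omega

lemma measurable_tau (hf : Measurable f) (hW : MeasurableSet W) : Measurable τ := by
  apply measurable_to_countable'
  intro n
  cases n with
  | zero =>
    have h : τ ⁻¹' {0} = ⋂ k, C f W k := by
      ext x
      simp only [mem_preimage, mem_singleton_iff, mem_iInter_C, tau_zero_iff hτ]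
    have h2 : MeasurableSet (τ ⁻¹' {0}) :=
      h ▸ MeasurableSet.iInter (fun k => measurableSet_C hf hW k)
    simpa [preimage] using h2
  | succ k =>
    have h : τ ⁻¹' {k + 1} = f^[k + 1] ⁻¹' W ∩ C f W k := by
      ext x
      simp only [mem_preimage, mem_singleton_iff, mem_inter_iff, tau_eq_succ_iff hτ]
    have h2 : MeasurableSet (τ ⁻¹' {k + 1}) :=
      h ▸ ((hf.iterate _) hW).inter (measurableSet_C hf hW k)
    simpa [preimage] using h2

end Tau
end KacAux

open KacAux

/-- Kac's theorem with the tower decomposition: for an ergodic probability-preserving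
map `f` and a set `W` of positive measure, with first return time `τ` and first return
map `F`, the normalized restriction `ν = μ(W)⁻¹ μ|W` is `F`-invariant, has integrable
return time `∫ τ dν = 1/μ(W)`, and `μ(E) = μ(W) ∑_k ν(f^[k]⁻¹ E ∩ {τ > k})`. -/
theorem kac_and_tower_decomposition
    {I : Type*} [MeasurableSpace I]
    (f : I → I) (μ : Measure I) [IsProbabilityMeasure μ] (hf : Ergodic f μ)
    (W : Set I) (hWmeas : MeasurableSet W) (hWpos : 0 < μ W)
    (τ : I → ℕ) (hτ : ∀ x, τ x = sInf {n : ℕ | 1 ≤ n ∧ f^[n] x ∈ W})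
    (F : I → I) (hF : ∀ x, F x = f^[τ x] x)
    (ν : Measure I) (hν : ν = (μ W)⁻¹ • μ.restrict W) :
    ν.map F = ν ∧
    ∫⁻ x in W, (τ x : ℝ≥0∞) ∂ν = (μ W)⁻¹ ∧
    ∀ E : Set I, MeasurableSet E →
      μ E = μ W * ∑' k : ℕ, ν (f^[k] ⁻¹' E ∩ {x ∈ W | k < τ x}) := by
  have hWne : μ W ≠ 0 := hWpos.ne'
  have hWtop : μ W ≠ ⊤ := measure_ne_top μ W
  have hfm : Measurable f := hf.measurable
  have hτm : Measurable τ := measurable_tau hτ hfm hWmeas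
  have hCm : ∀ k, MeasurableSet (C f W k) := fun k => measurableSet_C hfm hWmeas k
  have hSnull : μ (⋂ k, C f W k) = 0 := iInter_C_null hf hWmeas hWpos
  -- ν on measurable sets
  have νapply : ∀ X : Set I, MeasurableSet X → ν X = (μ W)⁻¹ * μ (X ∩ W) := by
    intro X hX
    rw [hν, Measure.smul_apply, Measure.restrict_apply hX, smul_eq_mul]
  -- measurability of the sep sets
  have hsepm : ∀ k : ℕ, MeasurableSet {x ∈ W | k < τ x} := by
    intro k
    have : {x ∈ W | k < τ x} = W ∩ τ ⁻¹' (Set.Ioi k) := by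
      ext x; simp [Set.mem_sep_iff, Set.mem_Ioi, and_comm]
    rw [this]
    exact hWmeas.inter (hτm measurableSet_Ioi)
  -- the main tower formula (part 3)
  have main : ∀ E : Set I, MeasurableSet E →
      μ E = μ W * ∑' k : ℕ, ν (f^[k] ⁻¹' E ∩ {x ∈ W | k < τ x}) := by
    intro E hE
    have htel := telescope hf hWmeas hWpos hE
    have keyk : ∀ k : ℕ,
        μ ((f^[k] ⁻¹' E ∩ {x ∈ W | k < τ x}) ∩ W) = μ (f^[k] ⁻¹' E ∩ C f W k ∩ W) := by
      intro k
      set A := f^[k] ⁻¹' E ∩ C f W k ∩ W with hA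
      set B := (f^[k] ⁻¹' E ∩ {x ∈ W | k < τ x}) ∩ W with hB
      have hBA : B ⊆ A := by
        rintro x ⟨⟨hxE, hxW, hxτ⟩, hxW'⟩
        exact ⟨⟨hxE, ((lt_tau_iff hτ).mp hxτ).2⟩, hxW'⟩
      have hdiff : A \ B ⊆ ⋂ k, C f W k := by
        rintro x ⟨⟨⟨hxE, hxC⟩, hxW⟩, hxB⟩
        rw [mem_iInter_C]
        intro j h1
        by_contra hj
        exact hxB ⟨⟨hxE, hxW, (lt_tau_iff hτ).mpr ⟨⟨j, h1, hj⟩, hxC⟩⟩, hxW⟩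
      refine le_antisymm (measure_mono hBA) ?_
      calc μ A ≤ μ (B ∪ (A \ B)) := measure_mono (fun x hx => by
              by_cases hxB : x ∈ B
              · exact Or.inl hxB
              · exact Or.inr ⟨hx, hxB⟩)
        _ ≤ μ B + μ (A \ B) := measure_union_le _ _
        _ ≤ μ B + μ (⋂ k, C f W k) := add_le_add_right (measure_mono hdiff) _
        _ = μ B := by rw [hSnull, add_zero]
    have hksum : ∀ k : ℕ, ν (f^[k] ⁻¹' E ∩ {x ∈ W | k < τ x})
        = (μ W)⁻¹ * μ (f^[k] ⁻¹' E ∩ C f W k ∩ W) := by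
      intro k
      rw [νapply _ (((hfm.iterate k) hE).inter (hsepm k)), keyk k]
    calc μ E = ∑' k : ℕ, μ (f^[k] ⁻¹' E ∩ C f W k ∩ W) := htel
      _ = ∑' k : ℕ, μ W * ((μ W)⁻¹ * μ (f^[k] ⁻¹' E ∩ C f W k ∩ W)) :=
          tsum_congr fun k => by
            rw [← mul_assoc, ENNReal.mul_inv_cancel hWne hWtop, one_mul]
      _ = μ W * ∑' k : ℕ, (μ W)⁻¹ * μ (f^[k] ⁻¹' E ∩ C f W k ∩ W) :=
          ENNReal.tsum_mul_left
      _ = μ W * ∑' k : ℕ, ν (f^[k] ⁻¹' E ∩ {x ∈ W | k < τ x}) := by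
          rw [tsum_congr fun k => (hksum k).symm]
  -- measurability of F
  have measF : Measurable F := by
    intro A hA
    have h : F ⁻¹' A = ⋃ n, τ ⁻¹' {n} ∩ f^[n] ⁻¹' A := by
      ext x
      simp only [mem_preimage, mem_iUnion, mem_inter_iff, mem_singleton_iff, hF x]
      exact ⟨fun h => ⟨τ x, rfl, h⟩, fun ⟨n, hn, h⟩ => hn ▸ h⟩
    rw [h]
    exact MeasurableSet.iUnion fun n =>
      (hτm (measurableSet_singleton n)).inter ((hfm.iterate n) hA)
  -- invariance of ν under F
  have inv : ∀ A : Set I, MeasurableSet A → μ (F ⁻¹' A ∩ W) = μ (A ∩ W) := by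
    intro A hA
    set B := A ∩ W with hBdef
    have hBm : MeasurableSet B := hA.inter hWmeas
    have htel := telescope hf hWmeas hWpos (hfm hBm)
    have hpre : μ (f ⁻¹' B) = μ B :=
      hf.toMeasurePreserving.measure_preimage hBm.nullMeasurableSet
    set G : ℕ → Set I := fun k => W ∩ τ ⁻¹' {k + 1} ∩ f^[k + 1] ⁻¹' A with hGdef
    have hGm : ∀ k, MeasurableSet (G k) := fun k =>
      (hWmeas.inter (hτm (measurableSet_singleton _))).inter ((hfm.iterate _) hA)
    have hGD : ∀ k, f^[k] ⁻¹' (f ⁻¹' B) ∩ C f W k ∩ W = G k := by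
      intro k
      have hiter : f^[k] ⁻¹' (f ⁻¹' B) = f^[k + 1] ⁻¹' B := by
        rw [← Set.preimage_comp, ← Function.iterate_succ']
      rw [hiter]
      ext x
      simp only [hGdef, mem_inter_iff, mem_preimage, mem_singleton_iff, hBdef]
      constructor
      · rintro ⟨⟨⟨hxA, hxW2⟩, hxC⟩, hxW⟩
        exact ⟨⟨hxW, (tau_eq_succ_iff hτ).mpr ⟨hxW2, hxC⟩⟩, hxA⟩
      · rintro ⟨⟨hxW, hxτ⟩, hxA⟩
        obtain ⟨hxW2, hxC⟩ := (tau_eq_succ_iff hτ).mp hxτ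
        exact ⟨⟨⟨hxA, hxW2⟩, hxC⟩, hxW⟩
    have hGdisj : Pairwise (Function.onFun Disjoint G) := by
      intro i j hij
      rw [Function.onFun, Set.disjoint_left]
      rintro x ⟨⟨_, hi⟩, _⟩ ⟨⟨_, hj⟩, _⟩
      simp only [mem_preimage, mem_singleton_iff] at hi hj
      omega
    have hU2 : (⋃ k, G k) ⊆ F ⁻¹' A ∩ W := by
      rintro x hx
      obtain ⟨k, ⟨⟨hxW, hxτ⟩, hxA⟩⟩ := mem_iUnion.mp hx
      simp only [mem_preimage, mem_singleton_iff] at hxτ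
      refine ⟨?_, hxW⟩
      rw [mem_preimage, hF x, hxτ]
      exact hxA
    have hU1 : F ⁻¹' A ∩ W ⊆ (⋃ k, G k) ∪ (⋂ k, C f W k) := by
      rintro x ⟨hxA, hxW⟩
      rw [mem_preimage, hF x] at hxA
      cases Nat.eq_zero_or_pos (τ x) with
      | inl h0 =>
        right
        rw [mem_iInter_C]
        exact (tau_zero_iff hτ).mp h0
      | inr hpos =>
        left
        obtain ⟨k, hk⟩ := Nat.exists_eq_succ_of_ne_zero (by omega : τ x ≠ 0)
        refine mem_iUnion.mpr ⟨k, ⟨⟨hxW, by simp [hk]⟩, ?_⟩⟩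
        rw [mem_preimage, show k + 1 = τ x by omega]
        exact hxA
    have hμU : μ (F ⁻¹' A ∩ W) = μ (⋃ k, G k) := by
      refine le_antisymm ?_ (measure_mono hU2)
      calc μ (F ⁻¹' A ∩ W) ≤ μ ((⋃ k, G k) ∪ (⋂ k, C f W k)) := measure_mono hU1
        _ ≤ μ (⋃ k, G k) + μ (⋂ k, C f W k) := measure_union_le _ _
        _ = μ (⋃ k, G k) := by rw [hSnull, add_zero]
    rw [hμU, measure_iUnion hGdisj hGm, ← hpre, htel]
    congr 1
    funext k
    rw [hGD k]
  refine ⟨?_, ?_, main⟩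
  · -- F-invariance of ν
    ext A hA
    rw [Measure.map_apply measF hA, νapply _ (measF hA), νapply _ hA, inv A hA]
  · -- Kac's formula
    have huniv := main univ MeasurableSet.univ
    simp only [measure_univ, preimage_univ, univ_inter] at huniv
    have hs : ∑' k : ℕ, ν {x ∈ W | k < τ x} = (μ W)⁻¹ := by
      have := congrArg (fun t => (μ W)⁻¹ * t) huniv
      simp only [mul_one, ← mul_assoc, ENNReal.inv_mul_cancel hWne hWtop, one_mul] at this
      exact this.symm
    have hrestr : ν.restrict W = ν := by
      rw [hν, Measure.restrict_smul, Measure.restrict_restrict hWmeas, inter_self]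
    have hindic : ∀ x : I, (τ x : ℝ≥0∞)
        = ∑' k : ℕ, Set.indicator {y | k < τ y} (fun _ => (1 : ℝ≥0∞)) x := by
      intro x
      have : ∀ k : ℕ, Set.indicator {y | k < τ y} (fun _ => (1 : ℝ≥0∞)) x
          = if k < τ x then 1 else 0 := by
        intro k
        by_cases h : k < τ x <;> simp [Set.indicator, h]
      rw [tsum_congr this, tsum_eq_sum (s := Finset.range (τ x))
        (fun k hk => by simp [Finset.mem_range] at hk; simp [hk])]
      rw [Finset.sum_congr rfl (fun k hk => if_pos (Finset.mem_range.mp hk))]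
      simp
    calc ∫⁻ x in W, (τ x : ℝ≥0∞) ∂ν
        = ∫⁻ x, (τ x : ℝ≥0∞) ∂ν := by rw [hrestr]
      _ = ∫⁻ x, ∑' k : ℕ, Set.indicator {y | k < τ y} (fun _ => (1 : ℝ≥0∞)) x ∂ν := by
          exact lintegral_congr hindic
      _ = ∑' k : ℕ, ∫⁻ x, Set.indicator {y | k < τ y} (fun _ => (1 : ℝ≥0∞)) x ∂ν :=
          lintegral_tsum (fun k => ((measurable_one.indicator
            (hτm measurableSet_Ioi : MeasurableSet {y | k < τ y}))).aemeasurable)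
      _ = ∑' k : ℕ, ν {y | k < τ y} := by
          congr 1; funext k
          exact lintegral_indicator_one (hτm measurableSet_Ioi)
      _ = ∑' k : ℕ, ν {x ∈ W | k < τ x} := by
          congr 1; funext k
          have h1 : ν {y | k < τ y} = (μ W)⁻¹ * μ ({y | k < τ y} ∩ W) :=
            νapply _ (hτm measurableSet_Ioi)
          have h2 : ν {x ∈ W | k < τ x} = (μ W)⁻¹ * μ ({x ∈ W | k < τ x} ∩ W) :=
            νapply _ (hsepm k)
          rw [h1, h2]
          congr 2
          ext x; simp [Set.mem_sep_iff, and_comm]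
      _ = (μ W)⁻¹ := hs
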